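/- arXiv:2210.02278 — 2 statements merged into one kernel-verified Lean document; each statement's English description precedes it below -/
import Mathlib

section
/- Distance comparison for reflections in the hyperboloid model: let I_λ be the reflection of ℍⁿ fixing the hypersurface U_λ = A_λ(ℍⁿ ∩ {x₁ = 0}) (where A_λ is the hyperbolic rotation by parameter λ in the (x₀,x₁)-plane), and let x, y ∈ Σ_λ = ⋃_{s<λ} U_s, with x̄ = I_λ(x), ȳ = I_λ(y). Then d(x,y) = d(x̄,ȳ) and d(x,ȳ) = d(x̄,y), and d(x,y) < d(x,ȳ). -/
/-- The Lorentzian inner product on `ℝ^{n,1}`: `x·y = -x₀y₀ + x₁y₁ + ⋯ + xₙyₙ`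
(index `0` is the time coordinate). -/
noncomputable def lprod (n : ℕ) (x y : Fin (n + 1) → ℝ) : ℝ :=
  -(x 0 * y 0) + ∑ i ∈ Finset.univ.filter (fun i : Fin (n + 1) => i ≠ 0), x i * y i

/-- The inverse hyperbolic cosine, `arcosh x = log (x + √(x² - 1))`. -/
noncomputable def arcoshR (x : ℝ) : ℝ := Real.log (x + Real.sqrt (x ^ 2 - 1))

/-- Geodesic distance on the hyperboloid model: `d(x,y) = arcosh (-x·y)`. -/
noncomputable def hypDist (n : ℕ) (x y : Fin (n + 1) → ℝ) : ℝ := arcoshR (-(lprod n x y))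

/-- The hyperbolic rotation `A_t` in the `(x₁,x₀)`-plane, identity on the remaining
coordinates. -/
noncomputable def Arot (n : ℕ) (t : ℝ) (x : Fin (n + 1) → ℝ) : Fin (n + 1) → ℝ := fun i =>
  if i = 0 then Real.cosh t * x 0 + Real.sinh t * x 1
  else if i = 1 then Real.sinh t * x 0 + Real.cosh t * x 1
  else x i

/-- The reflection `I(x₀,x₁,x₂,…,xₙ) = (x₀,-x₁,x₂,…,xₙ)`. -/
noncomputable def Irefl (n : ℕ) (x : Fin (n + 1) → ℝ) : Fin (n + 1) → ℝ := fun i =>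
  if i = 1 then -x 1 else x i

/-- The reflection `I_λ = A_λ ∘ I ∘ A_{-λ}` fixing the hypersurface `U_λ`. -/
noncomputable def Ilam (n : ℕ) (lam : ℝ) (x : Fin (n + 1) → ℝ) : Fin (n + 1) → ℝ :=
  Arot n lam (Irefl n (Arot n (-lam) x))

lemma fin_one_ne_zero (n : ℕ) (hn : 1 ≤ n) : (1 : Fin (n + 1)) ≠ 0 := by
  intro h
  have := congrArg Fin.val h
  rw [Fin.val_one', Nat.mod_eq_of_lt (by omega)] at this
  simp at this

lemma one_mem_filter (n : ℕ) (hn : 1 ≤ n) :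
    (1 : Fin (n + 1)) ∈ Finset.univ.filter (fun i : Fin (n + 1) => i ≠ 0) := by
  simp [fin_one_ne_zero n hn]

lemma lprod_split (n : ℕ) (hn : 1 ≤ n) (x y : Fin (n + 1) → ℝ) :
    lprod n x y = -(x 0 * y 0) + x 1 * y 1 +
      ∑ i ∈ (Finset.univ.filter (fun i : Fin (n + 1) => i ≠ 0)).erase 1, x i * y i := by
  unfold lprod
  rw [← Finset.add_sum_erase _ _ (one_mem_filter n hn)]
  ring

lemma Arot_zero (n : ℕ) (t : ℝ) (x : Fin (n + 1) → ℝ) :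
    Arot n t x 0 = Real.cosh t * x 0 + Real.sinh t * x 1 := by simp [Arot]

lemma Arot_one (n : ℕ) (hn : 1 ≤ n) (t : ℝ) (x : Fin (n + 1) → ℝ) :
    Arot n t x 1 = Real.sinh t * x 0 + Real.cosh t * x 1 := by
  simp [Arot, fin_one_ne_zero n hn]

lemma Arot_other (n : ℕ) (t : ℝ) (x : Fin (n + 1) → ℝ) (i : Fin (n + 1))
    (hi0 : i ≠ 0) (hi1 : i ≠ 1) : Arot n t x i = x i := by simp [Arot, hi0, hi1]

lemma Irefl_one (n : ℕ) (x : Fin (n + 1) → ℝ) : Irefl n x 1 = -x 1 := by simp [Irefl]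

lemma Irefl_other (n : ℕ) (x : Fin (n + 1) → ℝ) (i : Fin (n + 1)) (hi1 : i ≠ 1) :
    Irefl n x i = x i := by simp [Irefl, hi1]

lemma Irefl_zero (n : ℕ) (hn : 1 ≤ n) (x : Fin (n + 1) → ℝ) : Irefl n x 0 = x 0 :=
  Irefl_other n x 0 (fin_one_ne_zero n hn).symm

lemma lprod_Arot (n : ℕ) (hn : 1 ≤ n) (t : ℝ) (x y : Fin (n + 1) → ℝ) :
    lprod n (Arot n t x) (Arot n t y) = lprod n x y := by
  rw [lprod_split n hn, lprod_split n hn]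
  have hrest : ∑ i ∈ (Finset.univ.filter (fun i : Fin (n + 1) => i ≠ 0)).erase 1,
      Arot n t x i * Arot n t y i =
      ∑ i ∈ (Finset.univ.filter (fun i : Fin (n + 1) => i ≠ 0)).erase 1, x i * y i := by
    refine Finset.sum_congr rfl fun i hi => ?_
    simp only [Finset.mem_erase, Finset.mem_filter] at hi
    rw [Arot_other n t x i hi.2.2 hi.1, Arot_other n t y i hi.2.2 hi.1]
  rw [hrest, Arot_zero, Arot_zero, Arot_one n hn, Arot_one n hn]
  have hc := Real.cosh_sq_sub_sinh_sq t
  linear_combination (x 1 * y 1 - x 0 * y 0) * hc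

lemma lprod_Irefl_right (n : ℕ) (hn : 1 ≤ n) (x y : Fin (n + 1) → ℝ) :
    lprod n x (Irefl n y) = lprod n x y - 2 * (x 1 * y 1) := by
  rw [lprod_split n hn, lprod_split n hn]
  have hrest : ∑ i ∈ (Finset.univ.filter (fun i : Fin (n + 1) => i ≠ 0)).erase 1,
      x i * Irefl n y i =
      ∑ i ∈ (Finset.univ.filter (fun i : Fin (n + 1) => i ≠ 0)).erase 1, x i * y i := by
    refine Finset.sum_congr rfl fun i hi => ?_
    simp only [Finset.mem_erase, Finset.mem_filter] at hi
    rw [Irefl_other n y i hi.1]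
  rw [hrest, Irefl_zero n hn, Irefl_one]
  ring

lemma lprod_Irefl_left (n : ℕ) (hn : 1 ≤ n) (x y : Fin (n + 1) → ℝ) :
    lprod n (Irefl n x) y = lprod n x y - 2 * (x 1 * y 1) := by
  rw [lprod_split n hn, lprod_split n hn]
  have hrest : ∑ i ∈ (Finset.univ.filter (fun i : Fin (n + 1) => i ≠ 0)).erase 1,
      Irefl n x i * y i =
      ∑ i ∈ (Finset.univ.filter (fun i : Fin (n + 1) => i ≠ 0)).erase 1, x i * y i := by
    refine Finset.sum_congr rfl fun i hi => ?_
    simp only [Finset.mem_erase, Finset.mem_filter] at hi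
    rw [Irefl_other n x i hi.1]
  rw [hrest, Irefl_zero n hn, Irefl_one]
  ring

lemma lprod_Irefl_both (n : ℕ) (hn : 1 ≤ n) (x y : Fin (n + 1) → ℝ) :
    lprod n (Irefl n x) (Irefl n y) = lprod n x y := by
  rw [lprod_Irefl_left n hn, lprod_Irefl_right n hn, Irefl_one]
  ring

lemma Arot_cancel (n : ℕ) (hn : 1 ≤ n) (t : ℝ) (x : Fin (n + 1) → ℝ) :
    Arot n t (Arot n (-t) x) = x := by
  have hc := Real.cosh_sq_sub_sinh_sq t
  funext i
  rcases eq_or_ne i 0 with rfl | hi0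
  · rw [Arot_zero, Arot_zero, Arot_one n hn, Real.cosh_neg, Real.sinh_neg]
    linear_combination x 0 * hc
  · rcases eq_or_ne i 1 with rfl | hi1
    · rw [Arot_one n hn, Arot_zero, Arot_one n hn, Real.cosh_neg, Real.sinh_neg]
      linear_combination x 1 * hc
    · rw [Arot_other n t _ i hi0 hi1, Arot_other n (-t) x i hi0 hi1]

lemma arcosh_lt_arcosh (a b : ℝ) (ha : 1 ≤ a) (hab : a < b) : arcoshR a < arcoshR b := by
  unfold arcoshR
  apply Real.log_lt_log
  · have := Real.sqrt_nonneg (a ^ 2 - 1); linarith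
  · have h : Real.sqrt (a ^ 2 - 1) ≤ Real.sqrt (b ^ 2 - 1) :=
      Real.sqrt_le_sqrt (by nlinarith)
    linarith

lemma neg_lprod_ge_one (n : ℕ) (x y : Fin (n + 1) → ℝ)
    (hx : lprod n x x = -1) (hx0 : 0 < x 0)
    (hy : lprod n y y = -1) (hy0 : 0 < y 0) :
    1 ≤ -(lprod n x y) := by
  classical
  set s := Finset.univ.filter (fun i : Fin (n + 1) => i ≠ 0) with hs
  have hxx : ∑ i ∈ s, x i * x i = x 0 * x 0 - 1 := by
    unfold lprod at hx; rw [← hs] at hx; linarith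
  have hyy : ∑ i ∈ s, y i * y i = y 0 * y 0 - 1 := by
    unfold lprod at hy; rw [← hs] at hy; linarith
  have hxnn : (0:ℝ) ≤ ∑ i ∈ s, x i * x i :=
    Finset.sum_nonneg fun i _ => mul_self_nonneg _
  have hynn : (0:ℝ) ≤ ∑ i ∈ s, y i * y i :=
    Finset.sum_nonneg fun i _ => mul_self_nonneg _
  have hx1 : 1 ≤ x 0 := by nlinarith
  have hy1 : 1 ≤ y 0 := by nlinarith
  have hcs : (∑ i ∈ s, x i * y i) ^ 2 ≤ (∑ i ∈ s, x i ^ 2) * ∑ i ∈ s, y i ^ 2 :=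
    Finset.sum_mul_sq_le_sq_mul_sq s x y
  have hx2 : ∑ i ∈ s, x i ^ 2 = x 0 * x 0 - 1 := by
    rw [← hxx]; exact Finset.sum_congr rfl fun i _ => sq (x i)
  have hy2 : ∑ i ∈ s, y i ^ 2 = y 0 * y 0 - 1 := by
    rw [← hyy]; exact Finset.sum_congr rfl fun i _ => sq (y i)
  rw [hx2, hy2] at hcs
  have h0 : (0:ℝ) ≤ x 0 * y 0 - 1 := by nlinarith
  have hsq : (∑ i ∈ s, x i * y i) ^ 2 ≤ (x 0 * y 0 - 1) ^ 2 := by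
    nlinarith [sq_nonneg (x 0 - y 0)]
  have hS : ∑ i ∈ s, x i * y i ≤ x 0 * y 0 - 1 := by
    by_contra h
    push_neg at h
    have h1 : (0:ℝ) < ∑ i ∈ s, x i * y i - (x 0 * y 0 - 1) := by linarith
    have h2 : (0:ℝ) < ∑ i ∈ s, x i * y i + (x 0 * y 0 - 1) := by linarith
    nlinarith [mul_pos h1 h2]
  unfold lprod
  rw [← hs]
  linarith

/-- distance comparison for reflections in the hyperboloid model. For
`x, y ∈ Σ_λ = ⋃_{s<λ} U_s` on the hyperboloid, with `x̄ = I_λ x`, `ȳ = I_λ y`, one has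
`d(x,y) = d(x̄,ȳ)`, `d(x,ȳ) = d(x̄,y)` and `d(x,y) < d(x,ȳ)`. -/
theorem stmt_18 (n : ℕ) (hn : 1 ≤ n) (lam : ℝ) (x y : Fin (n + 1) → ℝ)
    (hxH : lprod n x x = -1) (hx0 : 0 < x 0)
    (hyH : lprod n y y = -1) (hy0 : 0 < y 0)
    (hxS : ∃ s < lam, Arot n (-s) x 1 = 0)
    (hyS : ∃ s < lam, Arot n (-s) y 1 = 0) :
    hypDist n x y = hypDist n (Ilam n lam x) (Ilam n lam y) ∧
      hypDist n x (Ilam n lam y) = hypDist n (Ilam n lam x) y ∧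
      hypDist n x y < hypDist n x (Ilam n lam y) := by
  obtain ⟨s, hs, hxs⟩ := hxS
  obtain ⟨s', hs', hys⟩ := hyS
  set u := Arot n (-lam) x with hu
  set v := Arot n (-lam) y with hv
  rw [Arot_one n hn, Real.cosh_neg, Real.sinh_neg] at hxs hys
  have hxs' : Real.cosh s * x 1 = Real.sinh s * x 0 := by linear_combination hxs
  have hys' : Real.cosh s' * y 1 = Real.sinh s' * y 0 := by linear_combination hys
  have hu1def : u 1 = -Real.sinh lam * x 0 + Real.cosh lam * x 1 := by
    rw [hu, Arot_one n hn, Real.cosh_neg, Real.sinh_neg]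
  have hv1def : v 1 = -Real.sinh lam * y 0 + Real.cosh lam * y 1 := by
    rw [hv, Arot_one n hn, Real.cosh_neg, Real.sinh_neg]
  have hu1 : u 1 < 0 := by
    have hkey : Real.cosh s * u 1 = Real.sinh (s - lam) * x 0 := by
      rw [hu1def, Real.sinh_sub]; linear_combination Real.cosh lam * hxs'
    have hneg : Real.sinh (s - lam) < 0 := by
      have : Real.sinh (s - lam) < Real.sinh 0 := Real.sinh_lt_sinh.mpr (by linarith)
      simpa using this
    have hcs : 0 < Real.cosh s := Real.cosh_pos s
    nlinarith
  have hv1 : v 1 < 0 := by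
    have hkey : Real.cosh s' * v 1 = Real.sinh (s' - lam) * y 0 := by
      rw [hv1def, Real.sinh_sub]; linear_combination Real.cosh lam * hys'
    have hneg : Real.sinh (s' - lam) < 0 := by
      have : Real.sinh (s' - lam) < Real.sinh 0 := Real.sinh_lt_sinh.mpr (by linarith)
      simpa using this
    have hcs : 0 < Real.cosh s' := Real.cosh_pos s'
    nlinarith
  have hu0 : 0 < u 0 := by
    have hu0def : u 0 = Real.cosh lam * x 0 - Real.sinh lam * x 1 := by
      rw [hu, Arot_zero, Real.cosh_neg, Real.sinh_neg]; ring
    have hkey : Real.cosh s * u 0 = Real.cosh (lam - s) * x 0 := by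
      rw [hu0def, Real.cosh_sub]; linear_combination (-Real.sinh lam) * hxs'
    have hcs : 0 < Real.cosh s := Real.cosh_pos s
    nlinarith [Real.cosh_pos (lam - s)]
  have hv0 : 0 < v 0 := by
    have hv0def : v 0 = Real.cosh lam * y 0 - Real.sinh lam * y 1 := by
      rw [hv, Arot_zero, Real.cosh_neg, Real.sinh_neg]; ring
    have hkey : Real.cosh s' * v 0 = Real.cosh (lam - s') * y 0 := by
      rw [hv0def, Real.cosh_sub]; linear_combination (-Real.sinh lam) * hys'
    have hcs : 0 < Real.cosh s' := Real.cosh_pos s'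
    nlinarith [Real.cosh_pos (lam - s')]
  have huu : lprod n u u = -1 := by rw [hu, lprod_Arot n hn]; exact hxH
  have hvv : lprod n v v = -1 := by rw [hv, lprod_Arot n hn]; exact hyH
  have e1 : lprod n x y = lprod n u v := by
    rw [hu, hv, lprod_Arot n hn]
  have e2 : lprod n (Ilam n lam x) (Ilam n lam y) = lprod n u v := by
    show lprod n (Arot n lam (Irefl n u)) (Arot n lam (Irefl n v)) = lprod n u v
    rw [lprod_Arot n hn, lprod_Irefl_both n hn]
  have hxu : Arot n lam u = x := Arot_cancel n hn lam x
  have hyv : Arot n lam v = y := Arot_cancel n hn lam y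
  have e3 : lprod n x (Ilam n lam y) = lprod n u v - 2 * (u 1 * v 1) := by
    conv_lhs => rw [← hxu]
    show lprod n (Arot n lam u) (Arot n lam (Irefl n v)) = _
    rw [lprod_Arot n hn, lprod_Irefl_right n hn]
  have e4 : lprod n (Ilam n lam x) y = lprod n u v - 2 * (u 1 * v 1) := by
    conv_lhs => rw [← hyv]
    show lprod n (Arot n lam (Irefl n u)) (Arot n lam v) = _
    rw [lprod_Arot n hn, lprod_Irefl_left n hn]
  have hge1 : 1 ≤ -(lprod n u v) := neg_lprod_ge_one n u v huu hu0 hvv hv0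
  refine ⟨?_, ?_, ?_⟩
  · unfold hypDist; rw [e1, e2]
  · unfold hypDist; rw [e3, e4]
  · unfold hypDist
    rw [e1, e3]
    apply arcosh_lt_arcosh _ _ hge1
    have : 0 < u 1 * v 1 := mul_pos_of_neg_of_neg hu1 hv1
    linarith
end

section
/- Moving-plane difference identity for integral equations: let G: ℍⁿ × ℍⁿ → ℝ be symmetric and invariant under the reflection I_λ (G(I_λ x, I_λ y) = G(x,y)), u(x) = ∫_{ℍⁿ} G(x,y) f(u(y)) dV(y), and u_λ(x) = u(I_λ x). Then for every x, u(x) - u_λ(x) = ∫_{Σ_λ} (G(x,y) - G(x̄,y)) (f(u(y)) - f(u_λ(y))) dV(y), where x̄ = I_λ(x), Σ_λ is one of the two open half-spaces determined by the fixed hypersurface of I_λ, and all integrals are assumed absolutely convergent. -/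
open MeasureTheory

/-- moving-plane difference identity for integral equations. Let `I` be a
measure-preserving involution of a measure space whose fixed hypersurface splits the space
into `S` and its reflection (a.e. every point lies on exactly one side), `G` symmetric and
reflection-invariant, and `u(x) = ∫ G(x,y) f(u(y)) dV(y)`. Then
`u(x) - u(I x) = ∫_S (G(x,y) - G(I x, y)) (f(u(y)) - f(u(I y))) dV(y)`. -/
theorem stmt_19 {X : Type*} [MeasurableSpace X] (μ : Measure X)
    (I : X → X) (hImeas : Measurable I) (hmp : MeasurePreserving I μ μ)
    (hI2 : I ∘ I = id)
    (S : Set X) (hS : MeasurableSet S)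
    (hsides : ∀ᵐ x ∂μ, (x ∈ S ∧ I x ∉ S) ∨ (x ∉ S ∧ I x ∈ S))
    (G : X → X → ℝ) (hGsym : ∀ x y, G x y = G y x) (hGinv : ∀ x y, G (I x) (I y) = G x y)
    (f : ℝ → ℝ) (u : X → ℝ)
    (hint : ∀ x, Integrable (fun y => G x y * f (u y)) μ)
    (hu : ∀ x, u x = ∫ y, G x y * f (u y) ∂μ) :
    ∀ x, u x - u (I x)
      = ∫ y in S, (G x y - G (I x) y) * (f (u y) - f (u (I y))) ∂μ := by
  intro x
  have hIinv : ∀ y, I (I y) = y := fun y => congrFun hI2 y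
  have hGx : ∀ a b, G a (I b) = G (I a) b := by
    intro a b
    rw [← hGinv (I a) b, hIinv]
  have hmap : Measure.map I μ = μ := hmp.map_eq
  have hSeq : (I ⁻¹' Sᶜ : Set X) =ᵐ[μ] S := by
    rw [Filter.eventuallyEq_set]
    filter_upwards [hsides] with y hy
    rcases hy with ⟨h1, h2⟩ | ⟨h1, h2⟩ <;> simp [Set.mem_preimage, h1, h2]
  have hsmm : ∀ z, AEStronglyMeasurable (fun y => G z y * f (u y)) (Measure.map I μ) := by
    intro z; rw [hmap]; exact (hint z).aestronglyMeasurable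
  have hintcomp : ∀ z, Integrable (fun y => G z (I y) * f (u (I y))) μ := by
    intro z
    have h1 : Integrable (fun y => G z y * f (u y)) (Measure.map I μ) := by
      rw [hmap]; exact hint z
    exact (integrable_map_measure (hsmm z) hImeas.aemeasurable).1 h1
  have key : ∀ z, ∫ y in Sᶜ, G z y * f (u y) ∂μ = ∫ y in S, G z (I y) * f (u (I y)) ∂μ := by
    intro z
    calc ∫ y in Sᶜ, G z y * f (u y) ∂μ
        = ∫ y in Sᶜ, G z y * f (u y) ∂(Measure.map I μ) := by rw [hmap]
      _ = ∫ y in I ⁻¹' Sᶜ, G z (I y) * f (u (I y)) ∂μ :=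
          setIntegral_map hS.compl (hsmm z) hImeas.aemeasurable
      _ = ∫ y in S, G z (I y) * f (u (I y)) ∂μ := setIntegral_congr_set hSeq
  have hu' : ∀ z, u z = (∫ y in S, G z y * f (u y) ∂μ) + ∫ y in S, G z (I y) * f (u (I y)) ∂μ := by
    intro z
    rw [hu z, ← integral_add_compl hS (hint z), key z]
  have hcalc : ∫ y in S, (G x y - G (I x) y) * (f (u y) - f (u (I y))) ∂μ
      = ((∫ y in S, G x y * f (u y) ∂μ) + ∫ y in S, G x (I y) * f (u (I y)) ∂μ)
        - ((∫ y in S, G (I x) y * f (u y) ∂μ) + ∫ y in S, G (I x) (I y) * f (u (I y)) ∂μ) := by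
    have e1 : ∫ y in S, (G x y - G (I x) y) * (f (u y) - f (u (I y))) ∂μ
        = ∫ y in S, ((G x y * f (u y) + G x (I y) * f (u (I y)))
            - (G (I x) y * f (u y) + G (I x) (I y) * f (u (I y)))) ∂μ := by
      refine integral_congr_ae (Filter.Eventually.of_forall fun y => ?_)
      simp only [hGx, hGinv, hIinv]
      ring
    have hA : IntegrableOn (fun y => G x y * f (u y) + G x (I y) * f (u (I y))) S μ :=
      ((hint x).integrableOn).add ((hintcomp x).integrableOn)
    have hB : IntegrableOn (fun y => G (I x) y * f (u y) + G (I x) (I y) * f (u (I y))) S μ :=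
      ((hint (I x)).integrableOn).add ((hintcomp (I x)).integrableOn)
    rw [e1, integral_sub hA hB,
      integral_add (hint x).integrableOn (hintcomp x).integrableOn,
      integral_add (hint (I x)).integrableOn (hintcomp (I x)).integrableOn]
  rw [hu' x, hu' (I x), hcalc]
end
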